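/- Let Z, W be Banach spaces, T : Z → W a quotient mapping, and let w : A → W be a continuous map from a topological space A such that ‖w(a)‖ < r for all a ∈ A. Define the multivalued map G : A → 2^Z by G(a) = {z ∈ Z : ‖z‖ ≤ R, T(z) = w(a)} where R > r. Then each G(a) is a nonempty closed convex subset of Z, and G is lower semicontinuous: for every open U ⊆ Z, the set {a ∈ A : G(a) ∩ U ≠ ∅} is open in A. -/

import Mathlib

open Metric Set

/-- A bounded linear surjection `T : Z → Y` is a *quotient mapping* if the induced
operator `Z ⧸ ker T → Y` is a linear isometric isomorphism. -/
def IsQuotientMapping {Z Y : Type*} [NormedAddCommGroup Z] [NormedAddCommGroup Y]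
    [NormedSpace ℝ Z] [NormedSpace ℝ Y] (T : Z →L[ℝ] Y) : Prop :=
  Function.Surjective T ∧
    ∃ e : (Z ⧸ LinearMap.ker (T : Z →ₗ[ℝ] Y)) ≃ₗᵢ[ℝ] Y,
      ∀ z : Z, e (Submodule.Quotient.mk z) = T z

/-!
The value `G a` is a closed ball cut by an affine subspace. For lower semicontinuity, note that `T`
maps `ball 0 R ∩ U` onto the set of `y` with `‖y‖ < R` whose fibre `{z | ‖z‖ ≤ R ∧ T z = y}` meets
`U`: a point of the fibre lying in `U` can be pushed into the open ball, without leaving the fibre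
or `U`, by moving it slightly towards a lift of `y` of norm `< R`. A quotient mapping is open, so
this set is open, and the set of `a` with `G a ∩ U ≠ ∅` is its preimage under `w`.
-/

open Filter Topology

theorem setOf_norm_le_and_apply_eq {X Y : Type*} [SeminormedAddCommGroup X] (f : X → Y) (R : ℝ)
    (y : Y) : {x : X | ‖x‖ ≤ R ∧ f x = y} = closedBall 0 R ∩ f ⁻¹' {y} := by
  ext x
  simp

section

variable {Z W : Type*} [NormedAddCommGroup Z] [NormedSpace ℝ Z]
  [NormedAddCommGroup W] [NormedSpace ℝ W]

namespace IsQuotientMapping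

variable {T : Z →L[ℝ] W} (hT : IsQuotientMapping T)
include hT

theorem norm_apply_le (z : Z) : ‖T z‖ ≤ ‖z‖ := by
  obtain ⟨-, e, he⟩ := hT
  rw [← he, e.norm_map]
  exact Submodule.Quotient.norm_mk_le _ z

theorem exists_apply_eq_norm_lt (y : W) {c : ℝ} (hc : ‖y‖ < c) : ∃ z : Z, T z = y ∧ ‖z‖ < c := by
  obtain ⟨-, e, he⟩ := hT
  obtain ⟨z, hz, hzc⟩ := Submodule.Quotient.norm_mk_lt (e.symm y) (sub_pos.mpr hc)
  refine ⟨z, by rw [← he, hz, e.apply_symm_apply], ?_⟩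
  rwa [e.symm.norm_map, add_sub_cancel] at hzc

theorem isOpenMap : IsOpenMap T := by
  obtain ⟨-, e, he⟩ := hT
  have hTe : ⇑T = e ∘ (LinearMap.ker (T : Z →ₗ[ℝ] W)).mkQ := funext fun z => (he z).symm
  rw [hTe]
  exact e.toHomeomorph.isOpenMap.comp (Submodule.isOpenMap_mkQ _)

end IsQuotientMapping

theorem norm_lineMap_lt {R : ℝ} {z v : Z} (hz : ‖z‖ ≤ R) (hv : ‖v‖ < R) {s : ℝ}
    (hs : s ∈ Ioc (0 : ℝ) 1) : ‖AffineMap.lineMap z v s‖ < R :=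
  calc ‖AffineMap.lineMap z v s‖ ≤ (1 - s) * ‖z‖ + s * ‖v‖ := by
        rw [AffineMap.lineMap_apply_module]
        refine (norm_add_le _ _).trans_eq ?_
        rw [norm_smul, norm_smul, Real.norm_of_nonneg (sub_nonneg.2 hs.2),
          Real.norm_of_nonneg hs.1.le]
    _ < (1 - s) * R + s * R :=
        add_lt_add_of_le_of_lt (mul_le_mul_of_nonneg_left hz (sub_nonneg.2 hs.2))
          (mul_lt_mul_of_pos_left hv hs.1)
    _ = R := by ring

theorem exists_norm_lt_mem_of_mem_nhds {R : ℝ} {z v : Z} (hz : ‖z‖ ≤ R) (hv : ‖v‖ < R)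
    {U : Set Z} (hU : U ∈ 𝓝 z) :
    ∃ s ∈ Ioc (0 : ℝ) 1, AffineMap.lineMap z v s ∈ U ∩ ball 0 R := by
  have hlim : Tendsto (AffineMap.lineMap z v) (𝓝[>] (0 : ℝ)) (𝓝 z) :=
    (AffineMap.lineMap_continuous.tendsto' 0 z (AffineMap.lineMap_apply_zero z v)).mono_left
      nhdsWithin_le_nhds
  obtain ⟨s, hsU, hs⟩ := ((hlim.eventually_mem hU).and (Ioc_mem_nhdsGT zero_lt_one)).exists
  exact ⟨s, hs, hsU, mem_ball_zero_iff.2 (norm_lineMap_lt hz hv hs)⟩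

theorem IsQuotientMapping.image_ball_inter_eq {T : Z →L[ℝ] W} (hT : IsQuotientMapping T) (R : ℝ)
    {U : Set Z} (hU : IsOpen U) :
    T '' (ball 0 R ∩ U) = {y : W | ‖y‖ < R ∧ ({z : Z | ‖z‖ ≤ R ∧ T z = y} ∩ U).Nonempty} := by
  ext y
  constructor
  · rintro ⟨z, ⟨hzR, hzU⟩, rfl⟩
    rw [mem_ball_zero_iff] at hzR
    exact ⟨(hT.norm_apply_le z).trans_lt hzR, z, ⟨hzR.le, rfl⟩, hzU⟩
  · rintro ⟨hy, z, ⟨hzR, rfl⟩, hzU⟩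
    obtain ⟨v, hvz, hv⟩ := hT.exists_apply_eq_norm_lt (T z) hy
    obtain ⟨s, -, hsU, hsR⟩ := exists_norm_lt_mem_of_mem_nhds hzR hv (hU.mem_nhds hzU)
    refine ⟨_, ⟨hsR, hsU⟩, ?_⟩
    simp [AffineMap.lineMap_apply_module, hvz, ← add_smul]

end

theorem stmt9_general {Z W : Type*}
    [NormedAddCommGroup Z] [NormedSpace ℝ Z]
    [NormedAddCommGroup W] [NormedSpace ℝ W]
    (T : Z →L[ℝ] W) (hT : IsQuotientMapping T)
    {A : Type*} [TopologicalSpace A] (w : A → W) (hw : Continuous w)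
    (r R : ℝ) (hr : ∀ a : A, ‖w a‖ < r) (hrR : r < R) :
    (∀ a : A,
        ({z : Z | ‖z‖ ≤ R ∧ T z = w a}).Nonempty ∧
        IsClosed {z : Z | ‖z‖ ≤ R ∧ T z = w a} ∧
        Convex ℝ {z : Z | ‖z‖ ≤ R ∧ T z = w a}) ∧
      ∀ U : Set Z, IsOpen U →
        IsOpen {a : A | ({z : Z | ‖z‖ ≤ R ∧ T z = w a} ∩ U).Nonempty} := by
  have hwR (a : A) : ‖w a‖ < R := (hr a).trans hrR
  refine ⟨fun a => ⟨?_, ?_, ?_⟩, fun U hU => ?_⟩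
  · obtain ⟨z, hz, hzR⟩ := hT.exists_apply_eq_norm_lt (w a) (hwR a)
    exact ⟨z, hzR.le, hz⟩
  · rw [setOf_norm_le_and_apply_eq]
    exact isClosed_closedBall.inter (isClosed_singleton.preimage T.continuous)
  · rw [setOf_norm_le_and_apply_eq]
    exact (convex_closedBall 0 R).inter ((convex_singleton _).linear_preimage (T : Z →ₗ[ℝ] W))
  · have hpre : {a : A | ({z : Z | ‖z‖ ≤ R ∧ T z = w a} ∩ U).Nonempty} =
        w ⁻¹' (T '' (ball 0 R ∩ U)) := by
      ext a
      simp [hT.image_ball_inter_eq R hU, hwR a]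
    rw [hpre]
    exact (hT.isOpenMap _ (isOpen_ball.inter hU)).preimage hw

/-- If `T : Z → W` is a quotient mapping and `w : A → W` is continuous with `‖w a‖ < r`
for all `a`, then for `R > r` the set-valued map `G(a) = {z : ‖z‖ ≤ R, T z = w a}` has
nonempty closed convex values and is lower semicontinuous. -/
theorem stmt9 {Z W : Type*}
    [NormedAddCommGroup Z] [NormedSpace ℝ Z] [CompleteSpace Z]
    [NormedAddCommGroup W] [NormedSpace ℝ W] [CompleteSpace W]
    (T : Z →L[ℝ] W) (hT : IsQuotientMapping T)
    {A : Type*} [TopologicalSpace A] (w : A → W) (hw : Continuous w)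
    (r R : ℝ) (hr : ∀ a : A, ‖w a‖ < r) (hrR : r < R) :
    (∀ a : A,
        ({z : Z | ‖z‖ ≤ R ∧ T z = w a}).Nonempty ∧
        IsClosed {z : Z | ‖z‖ ≤ R ∧ T z = w a} ∧
        Convex ℝ {z : Z | ‖z‖ ≤ R ∧ T z = w a}) ∧
      ∀ U : Set Z, IsOpen U →
        IsOpen {a : A | ({z : Z | ‖z‖ ≤ R ∧ T z = w a} ∩ U).Nonempty} :=
  stmt9_general T hT w hw r R hr hrR
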